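/- For any integer n ≥ 2, the maximum number of 2-cycles in the phase space of an SDS map of the form [K_n, f, id] (over all functions f : 𝔽₂ⁿ → 𝔽₂) equals the clique number of the graph Ĥ_n whose vertices are the vectors in 𝔽₂ⁿ with first coordinate 0 and where two vertices x, y are adjacent if and only if x + y contains 101 as a subsequence. -/

import Mathlib

/-- The SDS map over the complete graph `K n` with identity update order and
common vertex function `f`: vertices `0, 1, …, n-1` are updated in order,
each update replacing that coordinate with `f` of the current system state. -/
def sdsMap {n : ℕ} (f : (Fin n → ZMod 2) → ZMod 2) (x : Fin n → ZMod 2) :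
    Fin n → ZMod 2 :=
  (List.finRange n).foldl (fun v i => Function.update v i (f v)) x

/-- `z` contains `101` as a subsequence. -/
def contains101 {n : ℕ} (z : Fin n → ZMod 2) : Prop :=
  ∃ i j k : Fin n, i < j ∧ j < k ∧ z i = 1 ∧ z j = 0 ∧ z k = 1

/-- `z` contains `111` as a subsequence. -/
def contains111 {n : ℕ} (z : Fin n → ZMod 2) : Prop :=
  ∃ i j k : Fin n, i < j ∧ j < k ∧ z i = 1 ∧ z j = 1 ∧ z k = 1

/-- The number of 2-cycles in the phase space of `sdsMap f`. -/
noncomputable def numTwoCycles {n : ℕ} (f : (Fin n → ZMod 2) → ZMod 2) : ℕ :=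
  Set.ncard {p : Sym2 (Fin n → ZMod 2) |
    ∃ x y, p = s(x, y) ∧ x ≠ y ∧ sdsMap f x = y ∧ sdsMap f y = x}

namespace SDSAux
variable {n : ℕ} (f : (Fin n → ZMod 2) → ZMod 2) (x : Fin n → ZMod 2)

/-- partial state after k updates -/
def S (k : ℕ) : Fin n → ZMod 2 :=
  ((List.finRange n).take k).foldl (fun v i => Function.update v i (f v)) x

lemma S_n : S f x n = sdsMap f x := by
  unfold S sdsMap
  rw [List.take_of_length_le (by simp)]

lemma S_succ (k : ℕ) (h : k < n) :
    S f x (k+1) = Function.update (S f x k) ⟨k, h⟩ (f (S f x k)) := by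
  unfold S
  rw [List.take_succ]
  simp [List.getElem?_eq_getElem, List.length_finRange, h, List.getElem_finRange,
    List.foldl_concat]

lemma S_ge (k : ℕ) (j : Fin n) (hj : k ≤ (j : ℕ)) : S f x k j = x j := by
  induction k with
  | zero => simp [S]
  | succ m ih =>
      rw [S_succ f x m (lt_of_le_of_lt (Nat.le_of_succ_le hj) j.isLt)]
      rw [Function.update_of_ne (by simp [Fin.ext_iff]; omega)]
      exact ih (by omega)

lemma S_stable (k m : ℕ) (j : Fin n) (hj : (j : ℕ) < k) (hkm : k ≤ m) :
    S f x m j = S f x k j := by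
  induction m with
  | zero => omega
  | succ p ih =>
      rcases Nat.lt_or_ge p n with hp | hp
      · rcases Nat.eq_or_lt_of_le hkm with he | hl
        · rw [← he]
        · rw [S_succ f x p hp, Function.update_of_ne (by simp [Fin.ext_iff]; omega)]
          exact ih (by omega)
      · rcases Nat.eq_or_lt_of_le hkm with he | hl
        · rw [← he]
        · have : S f x (p+1) = S f x p := by
            unfold S
            rw [List.take_of_length_le (by simp; omega), List.take_of_length_le (by simp; omega)]
          rw [this]; exact ih (by omega)

/-- MAIN: characterization of sdsMap output -/
lemma main (i : Fin n) :
    sdsMap f x i = f (fun j => if j < i then sdsMap f x j else x j) := by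
  have h1 : sdsMap f x i = f (S f x i) := by
    rw [← S_n, S_stable f x ((i:ℕ)+1) n i (by omega) i.isLt,
      S_succ f x i i.isLt]
    simp
  rw [h1]
  congr 1
  funext j
  by_cases hj : j < i
  · rw [if_pos hj, ← S_n, S_stable f x ((j:ℕ)+1) n j (by omega) j.isLt,
      S_stable f x ((j:ℕ)+1) i j (by omega) (by exact_mod_cast hj)]
  · rw [if_neg hj]
    exact S_ge f x i j (by omega)

/-- UNIQ: converse -/
lemma uniq (y : Fin n → ZMod 2)
    (h : ∀ i : Fin n, y i = f (fun j => if j < i then y j else x j)) :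
    sdsMap f x = y := by
  suffices H : ∀ k, ∀ i : Fin n, (i : ℕ) < k → sdsMap f x i = y i by
    funext i; exact H n i i.isLt
  intro k
  induction k with
  | zero => intro i hi; omega
  | succ m ih =>
      intro i hi
      rw [main f x i, h i]
      congr 1
      funext j
      by_cases hj : j < i
      · rw [if_pos hj, if_pos hj, ih j (by have := Fin.lt_iff_val_lt_val.mp hj; omega)]
      · rw [if_neg hj, if_neg hj]

end SDSAux

namespace SDSAux
variable {n : ℕ}

lemma zmod2_cases (a : ZMod 2) : a = 0 ∨ a = 1 := by revert a; decide

lemma zmod2_add_self (a : ZMod 2) : a + a = 0 := by revert a; decide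

lemma add2_eq_zero {a b : ZMod 2} : a + b = 0 ↔ a = b := by revert a b; decide

lemma add2_eq_one {a b : ZMod 2} : a + b = 1 ↔ b = a + 1 := by revert a b; decide

lemma zmod2_cancel {a b : ZMod 2} (h : a + b = a) : b = 0 := by
  revert h; revert a b; decide

/-- constraints for a 2-cycle -/
lemma cyc_constraint {f : (Fin n → ZMod 2) → ZMod 2} {x y : Fin n → ZMod 2}
    (hxy : sdsMap f x = y) (i : Fin n) :
    y i = f (x + fun j => if j < i then x j + y j else 0) := by
  rw [← hxy, main f x i]
  congr 1
  funext j
  simp only [Pi.add_apply]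
  by_cases hj : j < i
  · rw [if_pos hj, if_pos hj, hxy, ← add_assoc, zmod2_add_self, zero_add]
  · rw [if_neg hj, if_neg hj, add_zero]

/-- every 2-cycle is a complement pair -/
lemma twocyc_compl {f : (Fin n → ZMod 2) → ZMod 2} {x y : Fin n → ZMod 2}
    (hn : 0 < n)
    (hxy : sdsMap f x = y) (hyx : sdsMap f y = x) (hne : x ≠ y) :
    y = x + 1 := by
  set z : Fin n → ZMod 2 := fun j => x j + y j with hz
  have hA : ∀ i : Fin n, y i = f (x + fun j => if j < i then z j else 0) :=
    fun i => cyc_constraint hxy i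
  have hB : ∀ i : Fin n, x i = f (y + fun j => if j < i then z j else 0) := by
    intro i
    have h := cyc_constraint hyx i
    convert h using 3
    funext j
    by_cases hj : j < i
    · simp only [if_pos hj, hz, add_comm]
    · simp only [if_neg hj]
  -- propagation: z i = 0 → z (i+1) = 0
  have prop : ∀ i : Fin n, ∀ h : (i:ℕ)+1 < n, z i = 0 → z ⟨(i:ℕ)+1, h⟩ = 0 := by
    intro i h hzi
    have hmask : (fun j : Fin n => if j < (⟨(i:ℕ)+1, h⟩ : Fin n) then z j else 0)
        = (fun j => if j < i then z j else 0) := by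
      funext j
      by_cases hj : j < i
      · rw [if_pos hj, if_pos (by simp only [Fin.lt_iff_val_lt_val] at hj ⊢; omega)]
      · by_cases hj2 : j < (⟨(i:ℕ)+1, h⟩ : Fin n)
        · rw [if_pos hj2, if_neg hj]
          have hji : j = i := by
            simp only [Fin.lt_iff_val_lt_val] at hj hj2
            exact Fin.ext (by omega)
          rw [hji, hzi]
        · rw [if_neg hj2, if_neg hj]
    have hy2 : y ⟨(i:ℕ)+1, h⟩ = y i := by rw [hA, hA, hmask]
    have hx2 : x ⟨(i:ℕ)+1, h⟩ = x i := by rw [hB, hB, hmask]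
    have hxyi : x i = y i := add2_eq_zero.mp hzi
    simp only [hz, hx2, hy2, hxyi, zmod2_add_self]
  -- propagation to all larger indices
  have prop2 : ∀ i : Fin n, z i = 0 → ∀ j : Fin n, i ≤ j → z j = 0 := by
    intro i hzi
    have key : ∀ d : ℕ, ∀ hd : (i:ℕ) + d < n, z ⟨(i:ℕ)+d, hd⟩ = 0 := by
      intro d
      induction d with
      | zero =>
          intro hd
          have : (⟨(i:ℕ)+0, hd⟩ : Fin n) = i := Fin.ext (by simp)
          rwa [this]
      | succ m ih =>
          intro hd
          have hm : (i:ℕ) + m < n := by omega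
          have h2 := prop ⟨(i:ℕ)+m, hm⟩ (by omega) (ih hm)
          exact h2
    intro j hij
    have hij' := Fin.le_iff_val_le_val.mp hij
    have hje : j = ⟨(i:ℕ) + ((j:ℕ) - (i:ℕ)), by have := j.isLt; omega⟩ :=
      Fin.ext (by show (j:ℕ) = (i:ℕ) + ((j:ℕ) - (i:ℕ)); omega)
    rw [hje]
    exact key _ _
  -- all-ones
  have allone : ∀ i : Fin n, z i = 1 := by
    by_contra hcon
    push_neg at hcon
    obtain ⟨i0, hi0⟩ := hcon
    have hi0' : z i0 = 0 := (zmod2_cases (z i0)).resolve_right hi0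
    have hex : ∃ k : ℕ, ∃ hk : k < n, z ⟨k, hk⟩ = 0 := ⟨i0, i0.isLt, hi0'⟩
    classical
    obtain ⟨k, ⟨hk, hzk⟩, hmin⟩ := Nat.lt_wfRel.wf.has_min _ hex
    have hge : ∀ j : Fin n, k ≤ (j:ℕ) → z j = 0 := fun j hj => prop2 ⟨k, hk⟩ hzk j hj
    have hlt : ∀ j : Fin n, (j:ℕ) < k → z j = 1 := by
      intro j hj
      rcases zmod2_cases (z j) with h | h
      · exact absurd hj (hmin (j:ℕ) ⟨j.isLt, by
          rwa [show (⟨(j:ℕ), j.isLt⟩ : Fin n) = j from Fin.ext rfl]⟩)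
      · exact h
    have hk0 : k ≠ 0 := by
      intro h0
      exact hne (funext fun j => add2_eq_zero.mp (hge j (by omega)))
    have hmaskk : (fun j : Fin n => if j < (⟨k, hk⟩ : Fin n) then z j else 0) = z := by
      funext j
      by_cases hj : j < (⟨k, hk⟩ : Fin n)
      · rw [if_pos hj]
      · rw [if_neg hj]
        exact (hge j (by simpa [Fin.lt_iff_val_lt_val] using hj)).symm
    have hmask0 : ∀ w : Fin n → ZMod 2,
        w + (fun j : Fin n => if j < (⟨0, hn⟩ : Fin n) then z j else 0) = w := by
      intro w
      funext j
      simp [Fin.lt_iff_val_lt_val]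
    have hxz : x + z = y := by
      funext j
      show x j + (x j + y j) = y j
      rw [← add_assoc, zmod2_add_self, zero_add]
    have hyz : y + z = x := by
      funext j
      show y j + (x j + y j) = x j
      rw [add_comm (x j) (y j), ← add_assoc, zmod2_add_self, zero_add]
    have e1 : y ⟨k, hk⟩ = f y := by rw [hA ⟨k, hk⟩, hmaskk, hxz]
    have e2 : x ⟨0, hn⟩ = f y := by rw [hB ⟨0, hn⟩, hmask0]
    have e3 : x ⟨k, hk⟩ = f x := by rw [hB ⟨k, hk⟩, hmaskk, hyz]
    have e4 : y ⟨0, hn⟩ = f x := by rw [hA ⟨0, hn⟩, hmask0]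
    have hzkk : x ⟨k, hk⟩ = y ⟨k, hk⟩ := add2_eq_zero.mp hzk
    have h5 : x ⟨0, hn⟩ = y ⟨0, hn⟩ := by rw [e2, e4, ← e1, ← e3, hzkk]
    have h6 : z ⟨0, hn⟩ = 0 := add2_eq_zero.mpr h5
    have h7 : z ⟨0, hn⟩ = 1 := hlt ⟨0, hn⟩ (by simpa using Nat.pos_of_ne_zero hk0)
    rw [h6] at h7
    exact absurd h7 (by decide)
  funext j
  show y j = x j + 1
  exact add2_eq_one.mp (allone j)

end SDSAux

namespace SDSAux
variable {n : ℕ}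

/-- prefix-ones vector -/
def E (n k : ℕ) : Fin n → ZMod 2 := fun j => if (j : ℕ) < k then 1 else 0

lemma E_zero : E n 0 = 0 := by funext j; simp [E]

lemma E_top : E n n = 1 := by funext j; simp [E, j.isLt]

lemma E_add_self (k : ℕ) (v : Fin n → ZMod 2) : v + E n k + E n k = v := by
  funext j
  simp only [Pi.add_apply, add_assoc, E]
  split_ifs <;> simp [show (1+1 : ZMod 2) = 0 by decide]

/-- sums of two prefix vectors contain no 101 -/
lemma no101_E_add_E (a b : ℕ) : ¬ contains101 (E n a + E n b) := by
  rintro ⟨p, q, r, hpq, hqr, h1, h0, h1'⟩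
  simp only [Pi.add_apply, E] at h1 h0 h1'
  rw [Fin.lt_iff_val_lt_val] at hpq hqr
  split_ifs at h1 h0 h1' <;>
    first
    | (exact absurd h1 (by decide)) | (exact absurd h0 (by decide))
    | (exact absurd h1' (by decide)) | omega

/-- complement of a prefix vector contains no 101 -/
lemma no101_E_compl (a : ℕ) : ¬ contains101 (E n a + 1) := by
  rintro ⟨p, q, r, hpq, hqr, h1, h0, h1'⟩
  simp only [Pi.add_apply, E, Pi.one_apply] at h1 h0 h1'
  rw [Fin.lt_iff_val_lt_val] at hpq hqr
  split_ifs at h1 h0 h1' <;> first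
    | (exact absurd h1 (by decide)) | (exact absurd h0 (by decide))
    | (exact absurd h1' (by decide)) | omega

/-- a 101-free nonzero vector with zero first coordinate is a prefix-sum interval -/
lemma interval_of_no101 (hn : 0 < n) (w : Fin n → ZMod 2) (hw : w ≠ 0)
    (h0 : w ⟨0, hn⟩ = 0) (h101 : ¬ contains101 w) :
    ∃ a c : Fin n, 0 < (a : ℕ) ∧ (a : ℕ) ≤ (c : ℕ) ∧ w = E n ((c:ℕ)+1) + E n (a:ℕ) := by
  classical
  have hex : ∃ j : Fin n, w j = 1 := by
    by_contra hc
    push_neg at hc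
    exact hw (funext fun j => (zmod2_cases (w j)).resolve_right (hc j))
  set F : Finset (Fin n) := Finset.univ.filter (fun j => w j = 1) with hF
  have hFne : F.Nonempty := by
    obtain ⟨j, hj⟩ := hex
    exact ⟨j, by simp [hF, hj]⟩
  set a := F.min' hFne with ha
  set c := F.max' hFne with hc
  have haF : w a = 1 := by have := F.min'_mem hFne; simp [hF] at this; exact this
  have hcF : w c = 1 := by have := F.max'_mem hFne; simp [hF] at this; exact this
  have hac : a ≤ c := F.min'_le _ (F.max'_mem hFne)
  have ha0 : 0 < (a : ℕ) := by
    rcases Nat.eq_zero_or_pos (a:ℕ) with h | h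
    · exfalso
      have : a = ⟨0, hn⟩ := Fin.ext h
      rw [this] at haF
      rw [h0] at haF
      exact absurd haF (by decide)
    · exact h
  refine ⟨a, c, ha0, Fin.le_iff_val_le_val.mp hac, ?_⟩
  funext j
  have hval : w j = 1 ↔ (a ≤ j ∧ j ≤ c) := by
    constructor
    · intro h
      have hjF : j ∈ F := by simp [hF, h]
      exact ⟨F.min'_le _ hjF, F.le_max' _ hjF⟩
    · rintro ⟨h1, h2⟩
      by_contra hne1
      have hj0 : w j = 0 := (zmod2_cases (w j)).resolve_right hne1
      have hja : a ≠ j := by rintro rfl; rw [haF] at hj0; exact absurd hj0 (by decide)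
      have hjc : j ≠ c := by rintro rfl; rw [hcF] at hj0; exact absurd hj0 (by decide)
      exact h101 ⟨a, j, c, lt_of_le_of_ne h1 hja, lt_of_le_of_ne h2 hjc, haF, hj0, hcF⟩
  simp only [Pi.add_apply, E]
  rcases zmod2_cases (w j) with h | h
  · rw [h]
    have := (not_iff_not.mpr hval).mp (by rw [h]; decide)
    rw [Fin.le_iff_val_le_val, Fin.le_iff_val_le_val] at this
    split_ifs with hh1 hh2 <;> try rfl
    · omega
    · omega
  · rw [h]
    have := hval.mp h
    rw [Fin.le_iff_val_le_val, Fin.le_iff_val_le_val] at this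
    split_ifs with hh1 hh2 <;> first | rfl | omega
end SDSAux

namespace SDSAux
variable {n : ℕ}

lemma z2_id1 (v P Q : Fin n → ZMod 2) : v + (P + Q) + P = v + Q := by
  funext j
  simp only [Pi.add_apply]
  have h : ∀ a b c : ZMod 2, a + (b + c) + b = a + c := by decide
  exact h _ _ _

lemma z2_id2 (v P Q : Fin n → ZMod 2) : v + (P + Q) + Q = v + P := by
  funext j
  simp only [Pi.add_apply]
  have h : ∀ a b c : ZMod 2, a + (b + c) + c = a + b := by decide
  exact h _ _ _

lemma z2_id3 (v : Fin n → ZMod 2) : v + 1 + 1 = v := by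
  funext j
  simp only [Pi.add_apply, Pi.one_apply]
  have h : ∀ a : ZMod 2, a + 1 + 1 = a := by decide
  exact h _

lemma z2_cancel_left (x u : Fin n → ZMod 2) : x + (x + u) = u := by
  funext j
  simp only [Pi.add_apply]
  have h : ∀ a b : ZMod 2, a + (a + b) = b := by decide
  exact h _ _

/-- constraint family of a complement 2-cycle -/
lemma compl_constraint {f : (Fin n → ZMod 2) → ZMod 2} {v : Fin n → ZMod 2}
    (hv : sdsMap f v = v + 1) (i : Fin n) :
    f (v + E n (i : ℕ)) = v i + 1 := by
  have h := cyc_constraint hv i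
  have hmask : (fun j : Fin n => if j < i then v j + (v + 1) j else 0) = E n (i : ℕ) := by
    funext j
    simp only [Pi.add_apply, Pi.one_apply, E, Fin.lt_iff_val_lt_val]
    have h2 : ∀ a : ZMod 2, a + (a + 1) = 1 := by decide
    split_ifs <;> simp [h2]
  rw [hmask] at h
  have h3 : (v + 1) i = v i + 1 := rfl
  rw [← h3, h]

/-- two distinct coexisting complement 2-cycles must have 101 in their difference -/
lemma conflict {f : (Fin n → ZMod 2) → ZMod 2} {x u : Fin n → ZMod 2} (hn : 0 < n)
    (hx : sdsMap f x = x + 1) (hx' : sdsMap f (x + 1) = x)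
    (hu : sdsMap f u = u + 1) (hu' : sdsMap f (u + 1) = u)
    (hx0 : x ⟨0, hn⟩ = 0) (hu0 : u ⟨0, hn⟩ = 0) (hne : x ≠ u) :
    contains101 (x + u) := by
  by_contra h101
  have hw0 : (x + u) ⟨0, hn⟩ = 0 := by
    simp only [Pi.add_apply, hx0, hu0]; decide
  have hwne : x + u ≠ 0 := by
    intro h
    apply hne
    funext j
    have := congrFun h j
    simp only [Pi.add_apply, Pi.zero_apply] at this
    exact add2_eq_zero.mp this
  obtain ⟨a, c, ha0, hac, hw⟩ := interval_of_no101 hn (x + u) hwne hw0 h101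
  have hueq : u = x + (E n ((c:ℕ)+1) + E n (a:ℕ)) := by
    rw [← hw]; exact (z2_cancel_left x u).symm
  have hxb' : sdsMap f (x+1) = (x+1) + 1 := by rw [z2_id3]; exact hx'
  have hub' : sdsMap f (u+1) = (u+1) + 1 := by rw [z2_id3]; exact hu'
  by_cases hb : (c:ℕ)+1 < n
  · -- interval not reaching the end
    set B : Fin n := ⟨(c:ℕ)+1, hb⟩ with hB
    have hwB : (x + u) B = 0 := by
      rw [hw]
      simp only [Pi.add_apply, E, hB]
      rw [if_neg (by omega), if_neg (by omega)]
      decide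
    have hwa : (x + u) a = 1 := by
      rw [hw]
      simp only [Pi.add_apply, E]
      rw [if_pos (by omega), if_neg (by omega)]
      decide
    have huB : x B = u B := add2_eq_zero.mp hwB
    have hua : u a = x a + 1 := add2_eq_one.mp hwa
    -- first pair of constraints
    have p1 : u + E n ((c:ℕ)+1) = x + E n (a:ℕ) := by
      rw [hueq, z2_id1]
    have e1 := compl_constraint hx a
    have e2 := compl_constraint hu B
    rw [show ((B:ℕ)) = (c:ℕ)+1 from rfl, p1, e1] at e2
    -- e2 : x a + 1 = u B + 1
    have q1 : x a = x B := by
      rw [← huB] at e2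
      have h3 : ∀ p q : ZMod 2, p + 1 = q + 1 → p = q := by decide
      exact h3 _ _ e2
    -- second pair
    have p2 : u + E n (a:ℕ) = x + E n ((c:ℕ)+1) := by
      rw [hueq, z2_id2]
    have e3 := compl_constraint hx B
    have e4 := compl_constraint hu a
    rw [p2, e3] at e4
    -- e4 : x B + 1 = u a + 1
    rw [hua, q1] at e4
    have h5 : ∀ p : ZMod 2, p + 1 = p + 1 + 1 → False := by decide
    exact h5 _ e4
  · -- interval reaches the end: c + 1 = n
    have hcn : (c:ℕ)+1 = n := by have := c.isLt; omega
    have hE1 : E n ((c:ℕ)+1) = 1 := by rw [hcn]; exact E_top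
    rw [hE1] at hueq
    have hwa : (x + u) a = 1 := by
      rw [hw]
      simp only [Pi.add_apply, E]
      rw [if_pos (by omega), if_neg (by omega)]
      decide
    have hua : u a = x a + 1 := add2_eq_one.mp hwa
    -- point x+1  =  u + E a
    have p1 : u + E n (a:ℕ) = x + 1 := by
      rw [hueq, z2_id2]
    have e1 := compl_constraint hxb' ⟨0, hn⟩
    rw [show (((⟨0, hn⟩ : Fin n)):ℕ) = 0 from rfl, E_zero, add_zero] at e1
    have e2 := compl_constraint hu a
    rw [p1, e1] at e2
    -- e2 : (x+1)⟨0,hn⟩ + 1 = u a + 1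
    have e2' : x ⟨0, hn⟩ + 1 + 1 = x a + 1 + 1 := by
      have h4 : (x + 1) ⟨0, hn⟩ = x ⟨0, hn⟩ + 1 := rfl
      rw [h4, hua] at e2
      exact e2
    have q1 : x a = 0 := by
      rw [hx0] at e2'
      have h5 : ∀ p : ZMod 2, (0:ZMod 2) + 1 + 1 = p + 1 + 1 → p = 0 := by decide
      exact (h5 _ e2')
    -- point x + E a = u + 1
    have p2 : u + 1 = x + E n (a:ℕ) := by
      rw [hueq, z2_id1]
    have e3 := compl_constraint hx a
    have e4 := compl_constraint hub' ⟨0, hn⟩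
    rw [show (((⟨0, hn⟩ : Fin n)):ℕ) = 0 from rfl, E_zero, add_zero, p2, e3] at e4
    -- e4 : x a + 1 = (x + E a)⟨0,hn⟩ + 1
    have h6 : (x + E n (a:ℕ)) ⟨0, hn⟩ = x ⟨0, hn⟩ + 1 := by
      simp only [Pi.add_apply, E]
      rw [if_pos (by exact_mod_cast ha0)]
    rw [h6, hx0, q1] at e4
    exact absurd e4 (by decide)

end SDSAux

namespace SDSAux
variable {n : ℕ}

lemma E_inj (i i' : Fin n) (h : E n (i:ℕ) + E n (i':ℕ) = 0) : i = i' := by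
  rcases lt_trichotomy (i:ℕ) (i':ℕ) with hlt | heq | hgt
  · have := congrFun h i
    simp only [Pi.add_apply, Pi.zero_apply, E] at this
    rw [if_neg (by omega), if_pos hlt] at this
    exact absurd this (by decide)
  · exact Fin.ext heq
  · have := congrFun h i'
    simp only [Pi.add_apply, Pi.zero_apply, E] at this
    rw [if_pos hgt, if_neg (by omega)] at this
    exact absurd this (by decide)

lemma E_sum_ne_one (hn : 0 < n) (i i' : Fin n) : E n (i:ℕ) + E n (i':ℕ) ≠ 1 := by
  intro h
  have := congrFun h ⟨n-1, by omega⟩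
  simp only [Pi.add_apply, Pi.one_apply, E] at this
  rw [if_neg (by have := i.isLt; omega), if_neg (by have := i'.isLt; omega)] at this
  exact absurd this (by decide)

lemma no101_shift (hn : 0 < n) (i i' : Fin n) (w : Fin n → ZMod 2)
    (hw : w = E n (i:ℕ) + E n (i':ℕ) + 1) (h0 : w ⟨0, hn⟩ = 0) :
    ¬ contains101 w := by
  have h1 := congrFun hw ⟨0, hn⟩
  rw [h0] at h1
  simp only [Pi.add_apply, Pi.one_apply, E] at h1
  by_cases hi : (0:ℕ) < (i:ℕ) <;> by_cases hi' : (0:ℕ) < (i':ℕ)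
  · rw [if_pos hi, if_pos hi'] at h1; exact absurd h1.symm (by decide)
  · -- i' = 0
    have hE : E n ((i'.1 : ℕ)) = 0 := by
      have : (i' : ℕ) = 0 := by omega
      rw [this, E_zero]
    rw [hw, hE, add_zero]
    exact no101_E_compl _
  · have hE : E n ((i.1 : ℕ)) = 0 := by
      have : (i : ℕ) = 0 := by omega
      rw [this, E_zero]
    rw [hw, hE, zero_add]
    exact no101_E_compl _
  · rw [if_neg hi, if_neg hi'] at h1; exact absurd h1.symm (by decide)

lemma add_one_one (v : Fin n → ZMod 2) : v + 1 + 1 = v := z2_id3 v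

/-- well-definedness of the construction -/
lemma wd (hn : 0 < n) (S : Finset (Fin n → ZMod 2))
    (hS0 : ∀ s ∈ S, s ⟨0, hn⟩ = 0)
    (hS101 : ∀ s ∈ S, ∀ t ∈ S, s ≠ t → contains101 (s + t))
    {v v' : Fin n → ZMod 2}
    (hv : v ∈ S ∨ v + 1 ∈ S) (hv' : v' ∈ S ∨ v' + 1 ∈ S)
    (i i' : Fin n) (heq : v + E n (i:ℕ) = v' + E n (i':ℕ)) : v i = v' i' := by
  have hd : v + v' = E n (i:ℕ) + E n (i':ℕ) := by
    funext j
    have h := congrFun heq j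
    simp only [Pi.add_apply] at h ⊢
    have hz : ∀ a b c d : ZMod 2, a + c = b + d → a + b = c + d := by decide
    exact hz _ _ _ _ h
  -- helper for the same-parity case
  have same_parity : ∀ s t : Fin n → ZMod 2, s ∈ S → t ∈ S → s + t = v + v' →
      (s = t → v = v') → v i = v' i' := by
    intro s t hs ht hst hvv
    by_cases hst' : s = t
    · have hvv' : v = v' := hvv hst'
      have hz : E n (i:ℕ) + E n (i':ℕ) = 0 := by
        rw [← hd, hvv']
        funext j
        simp only [Pi.add_apply, Pi.zero_apply]
        exact zmod2_add_self _
      rw [hvv', E_inj i i' hz]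
    · exfalso
      have h101 := hS101 s hs t ht hst'
      rw [hst, hd] at h101
      exact no101_E_add_E _ _ h101
  -- helper for the mixed-parity case
  have mixed_parity : ∀ s t : Fin n → ZMod 2, s ∈ S → t ∈ S → s + t = v + v' + 1 →
      (s = t → v + v' = 1) → v i = v' i' := by
    intro s t hs ht hst hvv
    exfalso
    by_cases hst' : s = t
    · have h1 : v + v' = 1 := hvv hst'
      rw [h1] at hd
      exact E_sum_ne_one hn i i' hd.symm
    · have h101 := hS101 s hs t ht hst'
      have hw : s + t = E n (i:ℕ) + E n (i':ℕ) + 1 := by rw [hst, hd]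
      have h0 : (s + t) ⟨0, hn⟩ = 0 := by
        simp only [Pi.add_apply, hS0 s hs, hS0 t ht]; decide
      exact no101_shift hn i i' (s + t) hw h0 h101
  rcases hv with h1 | h1 <;> rcases hv' with h2 | h2
  · exact same_parity v v' h1 h2 rfl id
  · -- v ∈ S, v' + 1 ∈ S
    apply mixed_parity v (v' + 1) h1 h2
    · funext j; simp only [Pi.add_apply, Pi.one_apply]
      have h3 : ∀ a b : ZMod 2, a + (b + 1) = a + b + 1 := by decide
      exact h3 _ _
    · intro h
      funext j
      have h4 := congrFun h j
      simp only [Pi.add_apply, Pi.one_apply] at h4 ⊢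
      have hz : ∀ a b : ZMod 2, a = b + 1 → a + b = 1 := by decide
      exact hz _ _ h4
  · -- v + 1 ∈ S, v' ∈ S
    apply mixed_parity (v + 1) v' h1 h2
    · funext j; simp only [Pi.add_apply, Pi.one_apply]
      have h3 : ∀ a b : ZMod 2, a + 1 + b = a + b + 1 := by decide
      exact h3 _ _
    · intro h
      funext j
      have h4 := congrFun h j
      simp only [Pi.add_apply, Pi.one_apply] at h4 ⊢
      have hz : ∀ a b : ZMod 2, a + 1 = b → a + b = 1 := by decide
      exact hz _ _ h4
  · -- v + 1 ∈ S, v' + 1 ∈ S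
    apply same_parity (v + 1) (v' + 1) h1 h2
    · funext j; simp only [Pi.add_apply, Pi.one_apply]
      have h3 : ∀ a b : ZMod 2, a + 1 + (b + 1) = a + b := by decide
      exact h3 _ _
    · intro h
      have h5 := congrArg (fun t => t + 1) h
      simpa only [z2_id3] using h5

/-- the function realizing a clique as 2-cycles -/
noncomputable def buildF (S : Finset (Fin n → ZMod 2)) : (Fin n → ZMod 2) → ZMod 2 :=
  fun p =>
    if h : ∃ q : (Fin n → ZMod 2) × Fin n, (q.1 ∈ S ∨ q.1 + 1 ∈ S) ∧ p = q.1 + E n (q.2:ℕ)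
    then h.choose.1 h.choose.2 + 1 else 0

lemma buildF_spec (hn : 0 < n) (S : Finset (Fin n → ZMod 2))
    (hS0 : ∀ s ∈ S, s ⟨0, hn⟩ = 0)
    (hS101 : ∀ s ∈ S, ∀ t ∈ S, s ≠ t → contains101 (s + t))
    {v : Fin n → ZMod 2} (hv : v ∈ S ∨ v + 1 ∈ S) (i : Fin n) :
    buildF S (v + E n (i:ℕ)) = v i + 1 := by
  unfold buildF
  have h : ∃ q : (Fin n → ZMod 2) × Fin n,
      (q.1 ∈ S ∨ q.1 + 1 ∈ S) ∧ v + E n (i:ℕ) = q.1 + E n (q.2:ℕ) := ⟨(v, i), hv, rfl⟩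
  rw [dif_pos h]
  obtain ⟨hq1, hq2⟩ := h.choose_spec
  have hwd := wd hn S hS0 hS101 hq1 hv h.choose.2 i hq2.symm
  rw [hwd]

lemma build_cycle (hn : 0 < n) (S : Finset (Fin n → ZMod 2))
    (hS0 : ∀ s ∈ S, s ⟨0, hn⟩ = 0)
    (hS101 : ∀ s ∈ S, ∀ t ∈ S, s ≠ t → contains101 (s + t))
    {v : Fin n → ZMod 2} (hv : v ∈ S ∨ v + 1 ∈ S) :
    sdsMap (buildF S) v = v + 1 := by
  apply uniq
  intro i
  have hmask : (fun j => if j < i then (v + 1) j else v j) = v + E n (i:ℕ) := by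
    funext j
    simp only [Pi.add_apply, Pi.one_apply, E, Fin.lt_iff_val_lt_val]
    split_ifs <;> simp
  rw [hmask, buildF_spec hn S hS0 hS101 hv i]
  rfl

end SDSAux

namespace SDSAux
variable {n : ℕ}

open Classical in
/-- the canonical representatives of 2-cycles of f -/
noncomputable def cycFinset (hn : 0 < n) (f : (Fin n → ZMod 2) → ZMod 2) :
    Finset (Fin n → ZMod 2) :=
  Finset.univ.filter (fun v => v ⟨0, hn⟩ = 0 ∧ sdsMap f v = v + 1 ∧ sdsMap f (v + 1) = v)

lemma mem_cycFinset (hn : 0 < n) (f : (Fin n → ZMod 2) → ZMod 2)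
    (v : Fin n → ZMod 2) :
    v ∈ cycFinset hn f ↔
      v ⟨0, hn⟩ = 0 ∧ sdsMap f v = v + 1 ∧ sdsMap f (v + 1) = v := by
  unfold cycFinset
  simp

lemma ne_add_one (v : Fin n → ZMod 2) (hn : 0 < n) : v ≠ v + 1 := by
  intro h
  have := congrFun h ⟨0, hn⟩
  simp only [Pi.add_apply, Pi.one_apply] at this
  have hz : ∀ a : ZMod 2, a ≠ a + 1 := by decide
  exact hz _ this

lemma cycSet_eq (hn : 0 < n) (f : (Fin n → ZMod 2) → ZMod 2) :
    {p : Sym2 (Fin n → ZMod 2) |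
      ∃ x y, p = s(x, y) ∧ x ≠ y ∧ sdsMap f x = y ∧ sdsMap f y = x}
      = (fun v => s(v, v + 1)) '' ↑(cycFinset hn f) := by
  ext p
  constructor
  · rintro ⟨x, y, rfl, hne, hxy, hyx⟩
    have hy : y = x + 1 := twocyc_compl hn hxy hyx hne
    rcases zmod2_cases (x ⟨0, hn⟩) with h0 | h0
    · refine ⟨x, ?_, by show s(x, x+1) = s(x,y); rw [hy]⟩
      rw [Finset.mem_coe, mem_cycFinset]
      exact ⟨h0, by rw [← hy]; exact hxy, by rw [← hy]; exact hyx⟩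
    · refine ⟨x + 1, ?_, ?_⟩
      · rw [Finset.mem_coe, mem_cycFinset]
        refine ⟨?_, ?_, ?_⟩
        · simp only [Pi.add_apply, Pi.one_apply, h0]; decide
        · rw [← hy, hyx, hy, z2_id3]
        · rw [z2_id3, hxy, hy]
      · show s(x + 1, x + 1 + 1) = s(x, y)
        rw [z2_id3, hy]
        exact Sym2.eq_swap
  · rintro ⟨v, hv, rfl⟩
    rw [Finset.mem_coe, mem_cycFinset] at hv
    exact ⟨v, v + 1, rfl, ne_add_one v hn, hv.2.1, hv.2.2⟩

lemma pair_injOn (hn : 0 < n) (C : Set (Fin n → ZMod 2))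
    (hC : ∀ v ∈ C, v ⟨0, hn⟩ = 0) :
    Set.InjOn (fun v => s(v, v + 1)) C := by
  intro v hv w hw h
  simp only [Sym2.eq, Sym2.rel_iff', Prod.mk.injEq, Prod.swap_prod_mk] at h
  rcases h with ⟨h1, _⟩ | ⟨h1, h2⟩
  · exact h1
  · exfalso
    have hv0 := hC v hv
    have hw0 := hC w hw
    have := congrFun h1 ⟨0, hn⟩
    simp only [Pi.add_apply, Pi.one_apply, hv0, hw0] at this
    exact absurd this (by decide)

lemma numTwoCycles_eq_card (hn : 0 < n) (f : (Fin n → ZMod 2) → ZMod 2) :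
    numTwoCycles f = (cycFinset hn f).card := by
  unfold numTwoCycles
  rw [cycSet_eq hn f]
  rw [Set.ncard_image_of_injOn (pair_injOn hn _ (fun v hv => by
    rw [Finset.mem_coe, mem_cycFinset] at hv; exact hv.1))]
  exact Set.ncard_coe_finset _

end SDSAux

theorem stmt5 (n : ℕ) (hn : 2 ≤ n) :
    ∃ m : ℕ,
      IsGreatest {k : ℕ | ∃ f : (Fin n → ZMod 2) → ZMod 2,
        numTwoCycles f = k} m ∧
      IsGreatest {k : ℕ | ∃ S : Finset (Fin n → ZMod 2),
        (∀ x ∈ S, x ⟨0, by omega⟩ = 0) ∧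
        (∀ x ∈ S, ∀ y ∈ S, x ≠ y → contains101 (x + y)) ∧
        S.card = k} m := by
  classical
  have hn0 : 0 < n := by omega
  set K := {k : ℕ | ∃ S : Finset (Fin n → ZMod 2),
        (∀ x ∈ S, x ⟨0, by omega⟩ = 0) ∧
        (∀ x ∈ S, ∀ y ∈ S, x ≠ y → contains101 (x + y)) ∧
        S.card = k} with hKdef
  have hK0 : (0:ℕ) ∈ K := ⟨∅, by simp, by simp, rfl⟩
  have hbdd : BddAbove K := by
    refine ⟨Fintype.card (Fin n → ZMod 2), ?_⟩
    rintro k ⟨S, -, -, rfl⟩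
    exact Finset.card_le_univ S
  set m := sSup K with hm
  have hmK : m ∈ K := Nat.sSup_mem ⟨0, hK0⟩ hbdd
  have hKgreatest : IsGreatest K m := ⟨hmK, fun k hk => le_csSup hbdd hk⟩
  have hub : ∀ f : (Fin n → ZMod 2) → ZMod 2, numTwoCycles f ≤ m := by
    intro f
    rw [SDSAux.numTwoCycles_eq_card hn0 f]
    apply le_csSup hbdd
    refine ⟨SDSAux.cycFinset hn0 f, ?_, ?_, rfl⟩
    · intro v hv
      rw [SDSAux.mem_cycFinset] at hv
      exact hv.1
    · intro x hx y hy hne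
      rw [SDSAux.mem_cycFinset] at hx
      rw [SDSAux.mem_cycFinset] at hy
      exact SDSAux.conflict hn0 hx.2.1 hx.2.2 hy.2.1 hy.2.2 hx.1 hy.1 hne
  refine ⟨m, ⟨?_, ?_⟩, hKgreatest⟩
  · -- m is attained by some f
    obtain ⟨S, hS0, hS101, hcard⟩ := hmK
    refine ⟨SDSAux.buildF S, ?_⟩
    have hsub : S ⊆ SDSAux.cycFinset hn0 (SDSAux.buildF S) := by
      intro s hs
      rw [SDSAux.mem_cycFinset]
      refine ⟨hS0 s hs, SDSAux.build_cycle hn0 S hS0 hS101 (Or.inl hs), ?_⟩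
      have h2 := SDSAux.build_cycle hn0 S hS0 hS101 (v := s + 1)
        (Or.inr (by rw [SDSAux.z2_id3]; exact hs))
      rw [h2, SDSAux.z2_id3]
    have hge : m ≤ numTwoCycles (SDSAux.buildF S) := by
      rw [SDSAux.numTwoCycles_eq_card hn0, ← hcard]
      exact Finset.card_le_card hsub
    exact le_antisymm (hub _) hge
  · rintro k ⟨f, rfl⟩
    exact hub f
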